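/- Fix integers r ≥ 3 and d ≥ 2, and an index 1 ≤ i ≤ d. In R = k[a_1,…,a_d,b_1,…,b_d,e_1,…,e_{2r−2}], let J be the ideal generated by F_d ∪ {a_k e_2 e_4 ⋯ e_{2r−2} : i < k ≤ d}, where F_d = {a_k b_l : 1 ≤ l < k ≤ d}. Then the ideal quotient J : ⟨a_i e_2 e_4 ⋯ e_{2r−2}⟩ equals the ideal generated by the d − 1 variables a_{i+1}, …, a_d, b_1, …, b_{i−1}; explicitly, it is ⟨a_2,…,a_d⟩ if i = 1, ⟨a_{i+1},…,a_d,b_1,…,b_{i−1}⟩ if 1 < i < d, and ⟨b_1,…,b_{d−1}⟩ if i = d. -/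

import Mathlib

/-!
Let `V` be the variables `a_{i+1}, …, a_d, b_1, …, b_{i-1}`. Every generator of `J` is divisible
by a variable of `V` (for `a_m b_l` with `l < m`, either `m > i` or `l < i`), whereas
`a_i e_2 ⋯ e_{2r-2}` involves none. So the substitution `V ↦ 0` kills `J` and fixes
`a_i e_2 ⋯ e_{2r-2}`; if `f a_i e_2 ⋯ e_{2r-2} ∈ J`, the image of `f` therefore vanishes, since
the polynomial ring is a domain, and this kernel is `⟨V⟩`. Conversely each variable of `V` times
`a_i e_2 ⋯ e_{2r-2}` is a multiple of a generator of `J`.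
-/

open MvPolynomial

/-- The edge variables of `G_{r,d}`: `a_1, …, a_d`, `b_1, …, b_d` and
`e_1, …, e_{2r-2}`.  We use 1-based names via 0-based `Fin` indices:
`EVar.a ⟨i-1,_⟩` is `a_i`, etc. -/
inductive EVar (d r : ℕ) : Type where
  | a : Fin d → EVar d r
  | b : Fin d → EVar d r
  | e : Fin (2 * r - 2) → EVar d r
deriving DecidableEq

/-- The monomial `e_2 e_4 ⋯ e_{2r-2}` (product of the even-indexed `e`-variables;
in the 0-indexed encoding these are the `EVar.e t` with `t.val` odd). -/
noncomputable def evenEProd (k : Type) [Field k] (d r : ℕ) : MvPolynomial (EVar d r) k :=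
  ∏ t ∈ Finset.univ.filter (fun t : Fin (2 * r - 2) => t.val % 2 = 1), X (EVar.e t)

namespace MvPolynomial

variable {R σ : Type*} [CommRing R]

open scoped Classical in
noncomputable def killVars (s : Set σ) : MvPolynomial σ R →ₐ[R] MvPolynomial σ R :=
  aeval fun v => if v ∈ s then 0 else X v

theorem killVars_X_of_mem {s : Set σ} {v : σ} (hv : v ∈ s) :
    killVars s (X v : MvPolynomial σ R) = 0 := by
  simp [killVars, hv]

theorem killVars_X_of_notMem {s : Set σ} {v : σ} (hv : v ∉ s) :
    killVars s (X v : MvPolynomial σ R) = X v := by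
  simp [killVars, hv]

theorem killVars_of_mem_supported {s : Set σ} {p : MvPolynomial σ R} (hp : p ∈ supported R sᶜ) :
    killVars s p = p :=
  hom_congr_vars (f₂ := RingHom.id _) (by ext; simp)
    (fun _ hv _ => killVars_X_of_notMem (mem_supported.mp hp hv)) rfl

theorem ker_killVars (s : Set σ) :
    RingHom.ker (killVars s : MvPolynomial σ R →ₐ[R] MvPolynomial σ R) = Ideal.span (X '' s) := by
  set I : Ideal (MvPolynomial σ R) := Ideal.span (X '' s)
  refine le_antisymm (fun f hf => ?_) (Ideal.span_le.mpr ?_)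
  · have hcomp : (Ideal.Quotient.mkₐ R I).comp (killVars s) = Ideal.Quotient.mkₐ R I := by
      refine algHom_ext fun v => ?_
      by_cases hv : v ∈ s
      · rw [AlgHom.comp_apply, killVars_X_of_mem hv, map_zero, eq_comm,
          Ideal.Quotient.mkₐ_eq_mk, Ideal.Quotient.eq_zero_iff_mem]
        exact Ideal.subset_span ⟨v, hv, rfl⟩
      · rw [AlgHom.comp_apply, killVars_X_of_notMem hv]
    rw [← Ideal.Quotient.eq_zero_iff_mem, ← Ideal.Quotient.mkₐ_eq_mk R, ← hcomp,
      AlgHom.comp_apply, RingHom.mem_ker.mp hf, map_zero]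
  · rintro _ ⟨v, hv, rfl⟩
    exact killVars_X_of_mem hv

theorem colon_span_singleton_le_span_X_image [IsDomain R] {s : Set σ}
    {I : Ideal (MvPolynomial σ R)} {p : MvPolynomial σ R} (hI : I ≤ Ideal.span (X '' s))
    (hp : p ∈ supported R sᶜ) (hp0 : p ≠ 0) : I.colon (Ideal.span {p}) ≤ Ideal.span (X '' s) := by
  intro f hf
  rw [← ker_killVars] at hI ⊢
  have hfp := hI (Ideal.mem_colon_span_singleton.mp hf)
  rw [RingHom.mem_ker, map_mul, killVars_of_mem_supported hp] at hfp
  exact (mul_eq_zero.mp hfp).resolve_right hp0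

end MvPolynomial

section Hrd

variable {k : Type} [Field k] {d r i : ℕ}

variable (d r i) in
def colonVars : Set (EVar d r) :=
  EVar.a '' {j | i ≤ j.val} ∪ EVar.b '' {j | j.val + 1 < i}

theorem ncard_colonVars (hi : 1 ≤ i) (hid : i ≤ d) : (colonVars d r i).ncard = d - 1 := by
  have hdisj : Disjoint (EVar.a '' {j : Fin d | i ≤ j.val} : Set (EVar d r))
      (EVar.b '' {j : Fin d | j.val + 1 < i}) := by
    rw [Set.disjoint_left]
    rintro _ ⟨_, _, rfl⟩ ⟨_, _, h⟩
    cases h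
  rw [colonVars, Set.ncard_union_eq hdisj, Set.ncard_image_of_injective _ (fun _ _ => EVar.a.inj),
    Set.ncard_image_of_injective _ (fun _ _ => EVar.b.inj),
    ← Set.ncard_image_of_injective _ Fin.val_injective,
    ← Set.ncard_image_of_injective {j : Fin d | j.val + 1 < i} Fin.val_injective]
  have hA : Fin.val '' {j : Fin d | i ≤ j.val} = Set.Ico i d :=
    Set.ext fun n => ⟨by rintro ⟨j, hj, rfl⟩; exact ⟨hj, j.isLt⟩, fun h => ⟨⟨n, h.2⟩, h.1, rfl⟩⟩
  have hB : Fin.val '' {j : Fin d | j.val + 1 < i} = Set.Iio (i - 1) :=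
    Set.ext fun n => ⟨by rintro ⟨j, hj : j.val + 1 < i, rfl⟩; exact Set.mem_Iio.mpr (by omega),
      fun (h : n < i - 1) => ⟨⟨n, by omega⟩, show n + 1 < i by omega, rfl⟩⟩
  rw [hA, hB, Set.ncard_Ico_nat, Set.ncard_Iio_nat]
  omega

theorem evenEProd_mem_supported : evenEProd k d r ∈ supported k (colonVars d r i)ᶜ := by
  refine Subalgebra.prod_mem _ fun t _ => (X_mem_supported).mpr ?_
  simp [colonVars]

theorem evenEProd_ne_zero : evenEProd k d r ≠ 0 :=
  Finset.prod_ne_zero_iff.mpr fun _ _ => X_ne_zero _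

theorem X_image_colonVars (hi : 1 ≤ i) (hid : i ≤ d) :
    X '' colonVars d r i =
    ({p : MvPolynomial (EVar d r) k | ∃ m : ℕ, ∃ (him : i < m) (hmd : m ≤ d),
          p = X (EVar.a ⟨m - 1, Nat.sub_one_lt_of_le (Nat.zero_lt_of_lt him) hmd⟩)} ∪
       {p : MvPolynomial (EVar d r) k | ∃ l : ℕ, ∃ (hl : 1 ≤ l) (hli : l < i),
          p = X (EVar.b ⟨l - 1, Nat.sub_one_lt_of_le hl (hli.le.trans hid)⟩)}) := by
  ext p
  refine ⟨?_, ?_⟩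
  · rintro ⟨_, ⟨j, hj : i ≤ j.val, rfl⟩ | ⟨j, hj : j.val + 1 < i, rfl⟩, rfl⟩
    · exact Or.inl ⟨j.val + 1, by omega, j.isLt, rfl⟩
    · exact Or.inr ⟨j.val + 1, by omega, hj, rfl⟩
  · rintro (⟨m, him, hmd, rfl⟩ | ⟨l, hl, hli, rfl⟩)
    · exact ⟨_, Or.inl ⟨_, show i ≤ m - 1 by omega, rfl⟩, rfl⟩
    · exact ⟨_, Or.inr ⟨_, show l - 1 + 1 < i by omega, rfl⟩, rfl⟩

variable (k d r i) in
/-- `F_d ∪ {a_m e_2 e_4 ⋯ e_{2r-2} : i < m ≤ d}`, with the paper's 1-based indices. -/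
def hrdGens : Set (MvPolynomial (EVar d r) k) :=
  {p | ∃ l m : ℕ, ∃ (hl : 1 ≤ l) (hlm : l < m) (hmd : m ≤ d),
      p = X (EVar.a ⟨m - 1, Nat.sub_one_lt_of_le (Nat.zero_lt_of_lt hlm) hmd⟩) *
        X (EVar.b ⟨l - 1, Nat.sub_one_lt_of_le hl (hlm.le.trans hmd)⟩)} ∪
    {p | ∃ m : ℕ, ∃ (him : i < m) (hmd : m ≤ d),
      p = X (EVar.a ⟨m - 1, Nat.sub_one_lt_of_le (Nat.zero_lt_of_lt him) hmd⟩) * evenEProd k d r}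

theorem span_hrdGens_le_span_X_colonVars :
    Ideal.span (hrdGens k d r i) ≤ Ideal.span (X '' colonVars d r i) := by
  have hX {v : EVar d r} (hv : v ∈ colonVars d r i) :
      (X v : MvPolynomial (EVar d r) k) ∈ Ideal.span (X '' colonVars d r i) :=
    Ideal.subset_span ⟨v, hv, rfl⟩
  refine Ideal.span_le.mpr ?_
  rintro _ (⟨l, m, hl, hlm, hmd, rfl⟩ | ⟨m, him, hmd, rfl⟩)
  · by_cases hm : i ≤ m - 1
    · exact Ideal.mul_mem_right _ _ (hX (Or.inl ⟨_, hm, rfl⟩))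
    · exact Ideal.mul_mem_left _ _ (hX (Or.inr ⟨_, show l - 1 + 1 < i by omega, rfl⟩))
  · exact Ideal.mul_mem_right _ _ (hX (Or.inl ⟨_, show i ≤ m - 1 by omega, rfl⟩))

theorem span_X_colonVars_le_colon (hi : 1 ≤ i) (hid : i ≤ d) :
    Ideal.span (X '' colonVars d r i) ≤
      (Ideal.span (hrdGens k d r i)).colon
        (Ideal.span {X (EVar.a ⟨i - 1, Nat.sub_one_lt_of_le hi hid⟩) * evenEProd k d r}) := by
  refine Ideal.span_le.mpr ?_
  rintro _ ⟨_, ⟨j, hj : i ≤ j.val, rfl⟩ | ⟨j, hj : j.val + 1 < i, rfl⟩, rfl⟩ <;>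
    rw [SetLike.mem_coe, Ideal.mem_colon_span_singleton]
  · rw [mul_left_comm]
    exact Ideal.mul_mem_left _ _ (Ideal.subset_span (Or.inr ⟨j.val + 1, by omega, j.isLt, rfl⟩))
  · rw [← mul_assoc, mul_comm (X (EVar.b j))]
    exact Ideal.mul_mem_right _ _
      (Ideal.subset_span (Or.inl ⟨j.val + 1, i, by omega, hj, hid, rfl⟩))

end Hrd

/-- Fix `r ≥ 3`, `d ≥ 2` and `1 ≤ i ≤ d`.  In
`R = k[a_1,…,a_d,b_1,…,b_d,e_1,…,e_{2r-2}]`, let `J` be the ideal generated by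
`F_d ∪ {a_m e_2 e_4 ⋯ e_{2r-2} : i < m ≤ d}`, where `F_d = {a_m b_l : 1 ≤ l < m ≤ d}`.
Then `J : ⟨a_i e_2 e_4 ⋯ e_{2r-2}⟩` is the ideal generated by the `d − 1` variables
`a_{i+1}, …, a_d, b_1, …, b_{i-1}` (which is `⟨a_2,…,a_d⟩` if `i = 1`,
`⟨a_{i+1},…,a_d,b_1,…,b_{i-1}⟩` if `1 < i < d`, and `⟨b_1,…,b_{d-1}⟩` if `i = d`). -/
theorem colon_ideal_Hrd_case (k : Type) [Field k] (d r : ℕ)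
    (i : ℕ) (hi : 1 ≤ i) (hid : i ≤ d) :
    (Ideal.span
        ({p : MvPolynomial (EVar d r) k | ∃ l m : ℕ, ∃ (_ : 1 ≤ l) (_ : l < m) (_ : m ≤ d),
            p = X (EVar.a ⟨m - 1, by omega⟩) * X (EVar.b ⟨l - 1, by omega⟩)} ∪
         {p : MvPolynomial (EVar d r) k | ∃ m : ℕ, ∃ (_ : i < m) (_ : m ≤ d),
            p = X (EVar.a ⟨m - 1, by omega⟩) * evenEProd k d r})).colon
      (Ideal.span {X (EVar.a ⟨i - 1, by omega⟩) * evenEProd k d r}) =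
    Ideal.span
      ({p : MvPolynomial (EVar d r) k | ∃ m : ℕ, ∃ (_ : i < m) (_ : m ≤ d),
          p = X (EVar.a ⟨m - 1, by omega⟩)} ∪
       {p : MvPolynomial (EVar d r) k | ∃ l : ℕ, ∃ (_ : 1 ≤ l) (_ : l < i),
          p = X (EVar.b ⟨l - 1, by omega⟩)}) ∧
    ({p : MvPolynomial (EVar d r) k | ∃ m : ℕ, ∃ (_ : i < m) (_ : m ≤ d),
          p = X (EVar.a ⟨m - 1, by omega⟩)} ∪
       {p : MvPolynomial (EVar d r) k | ∃ l : ℕ, ∃ (_ : 1 ≤ l) (_ : l < i),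
          p = X (EVar.b ⟨l - 1, by omega⟩)}).ncard = d - 1 := by
  rw [← X_image_colonVars hi hid, Set.ncard_image_of_injective _ X_injective]
  refine ⟨le_antisymm ?_ (span_X_colonVars_le_colon hi hid), ncard_colonVars hi hid⟩
  refine colon_span_singleton_le_span_X_image span_hrdGens_le_span_X_colonVars ?_ ?_
  · have ha : EVar.a ⟨i - 1, by omega⟩ ∉ colonVars d r i := by simp [colonVars]; omega
    exact Subalgebra.mul_mem _ (X_mem_supported.mpr ha) evenEProd_mem_supported
  · exact mul_ne_zero (X_ne_zero _) evenEProd_ne_zero
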